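/- In a real inner product space, suppose sequences (u^n) in the space and (r^n) in ℝ satisfy: L₀, L₁, and L = L₀ + L₁ are self-adjoint linear operators with L₀ positive semidefinite and -L₁ positive semidefinite, and for some μ with ((3u^{n+1}-4u^n+u^{n-1}), μ) ≤ 0: (i) μ = L₀ u^{n+1} + L₁ (2u^n - u^{n-1}) + r^{n+1} X, and (ii) 3r^{n+1} - 4r^n + r^{n-1} = (1/2)(X, 3u^{n+1} - 4u^n + u^{n-1}). Then the auxiliary energy E(u^{n+1},u^n,r^{n+1},r^n) ≤ E(u^n,u^{n-1},r^n,r^{n-1}), where E(a,b,p,q) = (1/2)(a, L a) - (a-b, L₁(a-b)) + (1/2)(2a-b, L(2a-b)) + p² + (2p-q)². -/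
import Mathlib
set_option maxHeartbeats 1000000

open RealInnerProductSpace

theorem bdf2_sav_energy_stability
    {V : Type*} [NormedAddCommGroup V] [InnerProductSpace ℝ V]
    (L₀ L₁ : V →ₗ[ℝ] V)
    (hL₀sa : ∀ v w : V, ⟪L₀ v, w⟫ = ⟪v, L₀ w⟫)
    (hL₁sa : ∀ v w : V, ⟪L₁ v, w⟫ = ⟪v, L₁ w⟫)
    (hL₀pos : ∀ v : V, 0 ≤ ⟪L₀ v, v⟫)
    (hL₁neg : ∀ v : V, ⟪L₁ v, v⟫ ≤ 0)
    (E : V → V → ℝ → ℝ → ℝ)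
    (hE : ∀ (a b : V) (p q : ℝ), E a b p q =
      (1/2) * ⟪a, (L₀ + L₁) a⟫ - ⟪a - b, L₁ (a - b)⟫
        + (1/2) * ⟪(2:ℝ) • a - b, (L₀ + L₁) ((2:ℝ) • a - b)⟫
        + p^2 + (2*p - q)^2)
    (u1 u0 um1 X μ : V) (r1 r0 rm1 : ℝ)
    (hdis : ⟪(3:ℝ) • u1 - (4:ℝ) • u0 + um1, μ⟫ ≤ 0)
    (hμ : μ = L₀ u1 + L₁ ((2:ℝ) • u0 - um1) + r1 • X)
    (hr : 3*r1 - 4*r0 + rm1 = (1/2) * ⟪X, (3:ℝ) • u1 - (4:ℝ) • u0 + um1⟫) :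
    E u1 u0 r1 r0 ≤ E u0 um1 r0 rm1 := by
  subst hμ
  have h0 := hL₀pos (u1 - (2:ℝ) • u0 + um1)
  have h1 := hL₁neg (u1 - (2:ℝ) • u0 + um1)
  have sa0 := hL₀sa u1 u1
  have cm0 := real_inner_comm (L₀ u1) u1
  have sa1 := hL₀sa u1 u0
  have cm1 := real_inner_comm (L₀ u1) u0
  have sa2 := hL₀sa u1 um1
  have cm2 := real_inner_comm (L₀ u1) um1
  have sa3 := hL₀sa u0 u1
  have cm3 := real_inner_comm (L₀ u0) u1
  have sa4 := hL₀sa u0 u0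
  have cm4 := real_inner_comm (L₀ u0) u0
  have sa5 := hL₀sa u0 um1
  have cm5 := real_inner_comm (L₀ u0) um1
  have sa6 := hL₀sa um1 u1
  have cm6 := real_inner_comm (L₀ um1) u1
  have sa7 := hL₀sa um1 u0
  have cm7 := real_inner_comm (L₀ um1) u0
  have sa8 := hL₀sa um1 um1
  have cm8 := real_inner_comm (L₀ um1) um1
  have sa9 := hL₁sa u1 u1
  have cm9 := real_inner_comm (L₁ u1) u1
  have sa10 := hL₁sa u1 u0
  have cm10 := real_inner_comm (L₁ u1) u0
  have sa11 := hL₁sa u1 um1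
  have cm11 := real_inner_comm (L₁ u1) um1
  have sa12 := hL₁sa u0 u1
  have cm12 := real_inner_comm (L₁ u0) u1
  have sa13 := hL₁sa u0 u0
  have cm13 := real_inner_comm (L₁ u0) u0
  have sa14 := hL₁sa u0 um1
  have cm14 := real_inner_comm (L₁ u0) um1
  have sa15 := hL₁sa um1 u1
  have cm15 := real_inner_comm (L₁ um1) u1
  have sa16 := hL₁sa um1 u0
  have cm16 := real_inner_comm (L₁ um1) u0
  have sa17 := hL₁sa um1 um1
  have cm17 := real_inner_comm (L₁ um1) um1
  have ex_u1 := real_inner_comm X u1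
  have ex_u0 := real_inner_comm X u0
  have ex_um1 := real_inner_comm X um1
  have hr2 : (3*r1 - 4*r0 + rm1) * (2*r1) = ((1/2) * ⟪X, (3:ℝ) • u1 - (4:ℝ) • u0 + um1⟫) * (2*r1) := by
    rw [hr]
  rw [hE, hE]
  simp only [LinearMap.add_apply, map_add, map_sub, map_smul, inner_add_left,
    inner_add_right, inner_sub_left, inner_sub_right, real_inner_smul_left,
    real_inner_smul_right, smul_eq_mul] at *
  rw [ex_u1, ex_u0, ex_um1] at hdis
  linarith [sq_nonneg (r1 - 2*r0 + rm1), h0, h1, hdis, hr2]
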